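/- arXiv:1111.1524 — 2 statements merged into one kernel-verified Lean document; each statement's English description precedes it below -/
import Mathlib

section
/- Let Y₀, Y₁, …, Y_{N-1} be i.i.d. real random variables, bounded almost surely, with E[Y₀] = 0, and let S = (1/N) Σ_{i} Y_i. Then for any c ≥ 0, P(√N · S ≥ c) ≤ e^{-c} · exp( E[Y₀²]/2 + E[|Y₀|³ e^{|Y₀|}]/6 ). -/
/-!
Chernoff's method with `t = 1/√N`: Markov's inequality for `exp (t ∑ Yᵢ)` and independence give
`P(√N S ≥ c) ≤ e^{-c} (E e^{t Y₀})^N`. Taylor's theorem with Lagrange remainder gives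
`e^z ≤ 1 + z + z²/2 + |z|³ e^{|z|}/6`, so for `0 ≤ t ≤ 1` and centred `Y₀` we get
`E e^{t Y₀} ≤ 1 + t² K ≤ e^{t² K}` with `K = E[Y₀²]/2 + E[|Y₀|³ e^{|Y₀|}]/6`,
and `(e^{t² K})^N = e^K`.
-/

open Real Set MeasureTheory ProbabilityTheory

theorem Real.iteratedDeriv_exp (n : ℕ) : iteratedDeriv n exp = exp := by
  rw [iteratedDeriv_eq_iterate, iter_deriv_exp]

theorem Real.exp_le_quadratic_add_cubic_remainder (z : ℝ) :
    exp z ≤ 1 + z + z ^ 2 / 2 + |z| ^ 3 * exp |z| / 6 := by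
  rcases eq_or_ne z 0 with rfl | hz
  · simp
  obtain ⟨ξ, hξ, hrem⟩ := taylor_mean_remainder_lagrange_iteratedDeriv (f := exp) (n := 2)
    hz.symm contDiff_exp.contDiffOn
  have hpoly : taylorWithinEval exp 2 (uIcc 0 z) 0 z = 1 + z + z ^ 2 / 2 := by
    simp only [taylor_within_apply, Finset.sum_range_succ, Finset.sum_range_zero,
      iteratedDerivWithin_eq_iteratedDeriv (uniqueDiffOn_uIcc hz.symm) contDiff_exp.contDiffAt
        left_mem_uIcc, Real.iteratedDeriv_exp, exp_zero]
    norm_num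
    ring
  have hξz : exp ξ * z ^ 3 ≤ exp |z| * |z| ^ 3 := by
    have hξ_le : ξ ≤ |z| := hξ.2.le.trans (max_le (abs_nonneg z) (le_abs_self z))
    calc exp ξ * z ^ 3 ≤ exp ξ * |z| ^ 3 :=
          mul_le_mul_of_nonneg_left ((le_abs_self _).trans_eq (abs_pow z 3)) (exp_pos ξ).le
      _ ≤ exp |z| * |z| ^ 3 := by gcongr
  rw [Real.iteratedDeriv_exp, hpoly, sub_zero] at hrem
  norm_num [Nat.factorial] at hrem
  linarith

theorem Real.exp_mul_le_one_add_mul_add_sq_mul {t : ℝ} (ht₀ : 0 ≤ t) (ht₁ : t ≤ 1) (x : ℝ) :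
    exp (t * x) ≤ 1 + t * x + t ^ 2 * (x ^ 2 / 2 + |x| ^ 3 * exp |x| / 6) := by
  have hrem : |t * x| ^ 3 * exp |t * x| ≤ t ^ 2 * (|x| ^ 3 * exp |x|) := by
    rw [abs_mul, abs_of_nonneg ht₀]
    calc (t * |x|) ^ 3 * exp (t * |x|) = t ^ 2 * (t * (|x| ^ 3 * exp (t * |x|))) := by ring
      _ ≤ t ^ 2 * (1 * (|x| ^ 3 * exp |x|)) := by
        gcongr
        exact mul_le_of_le_one_left (abs_nonneg x) ht₁
      _ = t ^ 2 * (|x| ^ 3 * exp |x|) := by rw [one_mul]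
  linear_combination Real.exp_le_quadratic_add_cubic_remainder (t * x) + hrem / 6

theorem Continuous.integrable_comp_of_ae_abs_le {Ω : Type*} [MeasurableSpace Ω] {μ : Measure Ω}
    [IsFiniteMeasure μ] {g : ℝ → ℝ} (hg : Continuous g) {X : Ω → ℝ} (hX : AEMeasurable X μ)
    {C : ℝ} (hC : ∀ᵐ ω ∂μ, |X ω| ≤ C) : Integrable (fun ω => g (X ω)) μ := by
  obtain ⟨B, hB⟩ := (isCompact_Icc (a := -C) (b := C)).exists_bound_of_continuousOn hg.continuousOn
  refine .of_bound (hg.measurable.comp_aemeasurable hX).aestronglyMeasurable B ?_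
  filter_upwards [hC] with ω hω
  exact hB _ (abs_le.mp hω)

namespace ProbabilityTheory

variable {Ω ι : Type*} [MeasurableSpace Ω] {μ : Measure Ω}

theorem mgf_le_exp_sq_mul [IsProbabilityMeasure μ] {X : Ω → ℝ} (hX : Integrable X μ)
    (hX₂ : Integrable (fun ω => X ω ^ 2) μ) (hX₃ : Integrable (fun ω => |X ω| ^ 3 * exp |X ω|) μ)
    (hmean : μ[X] = 0) {t : ℝ} (ht₀ : 0 ≤ t) (ht₁ : t ≤ 1) :
    mgf X μ t ≤
      exp (t ^ 2 * (μ[fun ω => X ω ^ 2] / 2 + μ[fun ω => |X ω| ^ 3 * exp |X ω|] / 6)) := by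
  have hquad : Integrable (fun ω => X ω ^ 2 / 2 + |X ω| ^ 3 * exp |X ω| / 6) μ :=
    (hX₂.div_const 2).add (hX₃.div_const 6)
  have hlin : Integrable (fun ω => 1 + t * X ω) μ := (integrable_const 1).add (hX.const_mul t)
  calc mgf X μ t
      ≤ ∫ ω, 1 + t * X ω + t ^ 2 * (X ω ^ 2 / 2 + |X ω| ^ 3 * exp |X ω| / 6) ∂μ :=
        integral_mono_of_nonneg (.of_forall fun ω => (exp_pos _).le)
          (hlin.add (hquad.const_mul _))
          (.of_forall fun ω => exp_mul_le_one_add_mul_add_sq_mul ht₀ ht₁ (X ω))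
    _ = 1 + t ^ 2 * (μ[fun ω => X ω ^ 2] / 2 + μ[fun ω => |X ω| ^ 3 * exp |X ω|] / 6) := by
        rw [integral_add hlin (hquad.const_mul _),
          integral_add (integrable_const 1) (hX.const_mul t), integral_const_mul,
          integral_const_mul, integral_add (hX₂.div_const 2) (hX₃.div_const 6),
          integral_div, integral_div, hmean]
        simp
    _ ≤ _ := add_one_le_exp _ |>.trans' (by rw [add_comm])

theorem measure_sum_ge_le_exp_mul_mgf_pow [IsProbabilityMeasure μ] [Fintype ι] {X : ι → Ω → ℝ}
    (h_meas : ∀ i, Measurable (X i)) (h_indep : iIndepFun X μ)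
    (hident : ∀ i j, IdentDistrib (X i) (X j) μ μ) (j : ι) {t : ℝ} (ht : 0 ≤ t)
    (h_int : ∀ i, Integrable (fun ω => exp (t * X i ω)) μ) (ε : ℝ) :
    μ.real {ω | ε ≤ ∑ i, X i ω} ≤ exp (-t * ε) * mgf (X j) μ t ^ Fintype.card ι := by
  have h := measure_ge_le_exp_mul_mgf ε ht
    (h_indep.integrable_exp_mul_sum h_meas (s := .univ) fun i _ => h_int i)
  rw [mgf_sum_of_identDistrib h_meas h_indep (fun i _ j _ => hident i j) (Finset.mem_univ j)] at h
  simpa only [Finset.sum_apply, Finset.card_univ] using h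

end ProbabilityTheory

theorem stmt4_general {Ω : Type} [MeasurableSpace Ω] (μ : Measure Ω) [IsProbabilityMeasure μ]
    (N : ℕ) (hN : 0 < N) (Y : Fin N → Ω → ℝ)
    (hmeas : ∀ i, Measurable (Y i))
    (hindep : iIndepFun Y μ)
    (hident : ∀ i j, IdentDistrib (Y i) (Y j) μ μ)
    (hbdd : ∃ C, ∀ i, ∀ᵐ ω ∂μ, |Y i ω| ≤ C)
    (hmean : ∫ ω, Y ⟨0, hN⟩ ω ∂μ = 0)
    (S : Ω → ℝ) (hS : ∀ ω, S ω = (1 / (N:ℝ)) * ∑ i, Y i ω)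
    (c : ℝ) :
    (μ {ω | c ≤ Real.sqrt N * S ω}).toReal ≤
      Real.exp (-c) *
        Real.exp ((∫ ω, (Y ⟨0, hN⟩ ω)^2 ∂μ) / 2
          + (∫ ω, |Y ⟨0, hN⟩ ω|^3 * Real.exp |Y ⟨0, hN⟩ ω| ∂μ) / 6) := by
  obtain ⟨C, hC⟩ := hbdd
  have hint {g : ℝ → ℝ} (hg : Continuous g) (i : Fin N) : Integrable (fun ω => g (Y i ω)) μ :=
    hg.integrable_comp_of_ae_abs_le (hmeas i).aemeasurable (hC i)
  have hN₀ : (0 : ℝ) < N := Nat.cast_pos.mpr hN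
  have hsqrt : 0 < √(N : ℝ) := sqrt_pos.mpr hN₀
  set t := (√(N : ℝ))⁻¹
  have ht₀ : 0 ≤ t := inv_nonneg.mpr hsqrt.le
  have ht₁ : t ≤ 1 := inv_le_one_of_one_le₀ (one_le_sqrt.mpr (Nat.one_le_cast.mpr hN))
  have ht_mul_sqrt : t * √(N : ℝ) = 1 := inv_mul_cancel₀ hsqrt.ne'
  have hN_mul_sq : N * t ^ 2 = 1 := by rw [inv_pow, sq_sqrt hN₀.le, mul_inv_cancel₀ hN₀.ne']
  have hevent : {ω | c ≤ √(N : ℝ) * S ω} = {ω | √(N : ℝ) * c ≤ ∑ i, Y i ω} := by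
    ext ω
    have hscale : √(N : ℝ) * (1 / N * ∑ i, Y i ω) = (∑ i, Y i ω) / √(N : ℝ) := by
      field_simp
      rw [sq_sqrt hN₀.le]
    rw [Set.mem_ofPred_eq, Set.mem_ofPred_eq, hS, hscale, le_div_iff₀' hsqrt]
  have hmgf := mgf_le_exp_sq_mul (X := Y ⟨0, hN⟩) (hint continuous_id _)
    (hint (continuous_pow 2) _) (hint (g := fun x => |x| ^ 3 * exp |x|) (by fun_prop) _)
    hmean ht₀ ht₁
  calc (μ {ω | c ≤ √(N : ℝ) * S ω}).toReal = μ.real {ω | √(N : ℝ) * c ≤ ∑ i, Y i ω} := by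
        rw [hevent, measureReal_def]
    _ ≤ exp (-t * (√(N : ℝ) * c)) * mgf (Y ⟨0, hN⟩) μ t ^ N := by
        simpa only [Fintype.card_fin] using measure_sum_ge_le_exp_mul_mgf_pow hmeas hindep hident
          ⟨0, hN⟩ ht₀ (hint (g := fun x => exp (t * x)) (by fun_prop)) _
    _ ≤ exp (-t * (√(N : ℝ) * c)) * exp (t ^ 2 * _) ^ N := by
        gcongr
        exact mgf_nonneg
    _ = _ := by
        rw [← exp_nat_mul, neg_mul, ← mul_assoc, ht_mul_sqrt, one_mul, ← mul_assoc, hN_mul_sq,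
          one_mul]

/-- Chernoff-type exponential bound
P(√N S ≥ c) ≤ e^{-c} exp(E[Y₀²]/2 + E[|Y₀|³ e^{|Y₀|}]/6) for S = (1/N) Σ Y_i,
with Y_i i.i.d. bounded and centered. -/
theorem stmt4 {Ω : Type} [MeasurableSpace Ω] (μ : Measure Ω) [IsProbabilityMeasure μ]
    (N : ℕ) (hN : 0 < N) (Y : Fin N → Ω → ℝ)
    (hmeas : ∀ i, Measurable (Y i))
    (hindep : iIndepFun Y μ)
    (hident : ∀ i j, IdentDistrib (Y i) (Y j) μ μ)
    (hbdd : ∃ C, ∀ i, ∀ᵐ ω ∂μ, |Y i ω| ≤ C)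
    (hmean : ∫ ω, Y ⟨0, hN⟩ ω ∂μ = 0)
    (S : Ω → ℝ) (hS : ∀ ω, S ω = (1 / (N:ℝ)) * ∑ i, Y i ω)
    (c : ℝ) (hc : 0 ≤ c) :
    (μ {ω | c ≤ Real.sqrt N * S ω}).toReal ≤
      Real.exp (-c) *
        Real.exp ((∫ ω, (Y ⟨0, hN⟩ ω)^2 ∂μ) / 2
          + (∫ ω, |Y ⟨0, hN⟩ ω|^3 * Real.exp |Y ⟨0, hN⟩ ω| ∂μ) / 6) :=
  stmt4_general μ N hN Y hmeas hindep hident hbdd hmean S hS c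
end

section
/- Let T_h be a mesh of a bounded domain D, and for each element K let S ⊃ K satisfy c_- ≤ |S|/|K| ≤ c_+ with c_-, c_+ > 0 independent of K and h. Then there exists C independent of h such that for any affine function τ on S, ‖τ‖_{H¹(S)} ≤ C ‖τ‖_{H¹(K)}. -/
/-!
Pull back along `h = homothety x₀ ρ`: `∫_S τ² = ρ^d ∫_K (τ ∘ h)²` and `|S| = ρ^d |K|`.
As `τ` is affine, `τ ∘ h = (2ρ - 1) τ + 2(1 - ρ) (τ ∘ m)`, where `m = homothety x₀ (1/2)` maps the
convex set `K ∋ x₀` into itself, so `∫_K (τ ∘ m)² = 2^d ∫_{m K} τ² ≤ 2^d ∫_K τ²`. Altogether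
`‖τ‖²_{H¹(S)} ≤ ρ^d (2(2ρ - 1)² + 2^(d+3) (ρ - 1)²) ‖τ‖²_{H¹(K)}`, uniformly for `ρ ≤ ρmax`.
-/

open MeasureTheory RealInnerProductSpace
open AffineMap (homothety)

section Affine

variable {E : Type*} [AddCommGroup E] [Module ℝ E]

theorem Convex.image_homothety_subset {K : Set E} (hK : Convex ℝ K) {x₀ : E} (hx₀ : x₀ ∈ K)
    {t : ℝ} (ht : t ∈ Set.Icc 0 1) : homothety x₀ t '' K ⊆ K := by
  rintro _ ⟨y, hy, rfl⟩
  rw [AffineMap.homothety_eq_lineMap]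
  exact hK.lineMap_mem hx₀ hy ht

theorem AffineMap.apply_homothety (τ : E →ᵃ[ℝ] ℝ) (x₀ : E) (r : ℝ) (y : E) :
    τ (homothety x₀ r y) = r * τ y + (1 - r) * τ x₀ := by
  rw [AffineMap.homothety_eq_lineMap, AffineMap.apply_lineMap, AffineMap.lineMap_apply_ring]
  ring

end Affine

section Homothety

variable {E : Type*} [NormedAddCommGroup E] [NormedSpace ℝ E]

theorem hasFDerivAt_homothety (x₀ : E) (r : ℝ) (y : E) :
    HasFDerivAt (homothety x₀ r) (r • ContinuousLinearMap.id ℝ E) y := by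
  have : ⇑(homothety x₀ r) = fun y => r • (y - x₀) + x₀ := by
    ext; simp [AffineMap.homothety_apply]
  rw [this]
  exact ((hasFDerivAt_id y).sub_const x₀).const_smul r |>.add_const x₀

variable [FiniteDimensional ℝ E] [MeasurableSpace E] [BorelSpace E]

theorem setIntegral_image_homothety (μ : Measure E) [μ.IsAddHaarMeasure]
    {F : Type*} [NormedAddCommGroup F] [NormedSpace ℝ F] {K : Set E} (hK : MeasurableSet K)
    (x₀ : E) {r : ℝ} (hr : r ≠ 0) (g : E → F) :
    ∫ x in homothety x₀ r '' K, g x ∂μ =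
      |r| ^ Module.finrank ℝ E • ∫ y in K, g (homothety x₀ r y) ∂μ := by
  rw [integral_image_eq_integral_abs_det_fderiv_smul μ hK
    (fun y _ => (hasFDerivAt_homothety x₀ r y).hasFDerivWithinAt)
    (AffineMap.homothety_injective x₀ hr).injOn]
  simp [ContinuousLinearMap.det, LinearMap.det_smul, integral_smul]

theorem integrableOn_sq_comp_homothety_iff {μ : Measure E} (τ : E →ᵃ[ℝ] ℝ) {K : Set E}
    (hK : μ K ≠ ⊤) (x₀ : E) {r : ℝ} (hr : r ≠ 0) :
    IntegrableOn (fun y => τ (homothety x₀ r y) ^ 2) K μ ↔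
      IntegrableOn (fun y => τ y ^ 2) K μ := by
  have : IsFiniteMeasure (μ.restrict K) := isFiniteMeasure_restrict.mpr hK
  have hτ := τ.continuous_of_finiteDimensional
  simp only [IntegrableOn, τ.apply_homothety]
  have hτh : Continuous fun y => r * τ y + (1 - r) * τ x₀ := by fun_prop
  rw [← memLp_two_iff_integrable_sq hτh.aestronglyMeasurable,
    ← memLp_two_iff_integrable_sq hτ.aestronglyMeasurable]
  constructor
  · intro h
    convert (h.sub (memLp_const ((1 - r) * τ x₀))).const_mul r⁻¹ using 2 with y
    simp only [Pi.sub_apply]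
    field_simp
    ring
  · intro h
    exact (h.const_mul r).add (memLp_const _)

theorem integral_sq_comp_homothety_le {μ : Measure E} [μ.IsAddHaarMeasure] (τ : E →ᵃ[ℝ] ℝ)
    {K : Set E} (hKm : MeasurableSet K) (hKc : Convex ℝ K) (hK : μ K ≠ ⊤) {x₀ : E} (hx₀ : x₀ ∈ K)
    (hτK : IntegrableOn (fun y => τ y ^ 2) K μ) (ρ : ℝ) :
    ∫ y in K, τ (homothety x₀ ρ y) ^ 2 ∂μ ≤
      (2 * (2 * ρ - 1) ^ 2 + 2 ^ (Module.finrank ℝ E + 3) * (ρ - 1) ^ 2) *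
        ∫ y in K, τ y ^ 2 ∂μ := by
  set n := Module.finrank ℝ E
  set m := homothety x₀ (2⁻¹ : ℝ)
  have hτmK : IntegrableOn (fun y => τ (m y) ^ 2) K μ :=
    (integrableOn_sq_comp_homothety_iff τ hK x₀ (by norm_num)).2 hτK
  have hτm : ∫ y in K, τ (m y) ^ 2 ∂μ ≤ 2 ^ n * ∫ y in K, τ y ^ 2 ∂μ := by
    have hmono : ∫ x in m '' K, τ x ^ 2 ∂μ ≤ ∫ y in K, τ y ^ 2 ∂μ :=
      setIntegral_mono_set hτK (ae_of_all _ fun _ => sq_nonneg _)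
        (hKc.image_homothety_subset hx₀ ⟨by norm_num, by norm_num⟩).eventuallyLE
    rwa [setIntegral_image_homothety μ hKm x₀ (by norm_num), smul_eq_mul,
      abs_of_pos (by norm_num), inv_pow, inv_mul_le_iff₀ (by positivity)] at hmono
  have hpt : ∀ y, τ (homothety x₀ ρ y) ^ 2 ≤
      2 * (2 * ρ - 1) ^ 2 * τ y ^ 2 + 8 * (ρ - 1) ^ 2 * τ (m y) ^ 2 := by
    intro y
    have hcomb : τ (homothety x₀ ρ y) = (2 * ρ - 1) * τ y + 2 * (1 - ρ) * τ (m y) := by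
      simp only [m, τ.apply_homothety]
      ring
    calc τ (homothety x₀ ρ y) ^ 2
        ≤ 2 * (((2 * ρ - 1) * τ y) ^ 2 + (2 * (1 - ρ) * τ (m y)) ^ 2) := hcomb ▸ add_sq_le
      _ = 2 * (2 * ρ - 1) ^ 2 * τ y ^ 2 + 8 * (ρ - 1) ^ 2 * τ (m y) ^ 2 := by ring
  calc ∫ y in K, τ (homothety x₀ ρ y) ^ 2 ∂μ
      ≤ ∫ y in K, (2 * (2 * ρ - 1) ^ 2 * τ y ^ 2 + 8 * (ρ - 1) ^ 2 * τ (m y) ^ 2) ∂μ :=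
        integral_mono_of_nonneg (ae_of_all _ fun _ => sq_nonneg _)
          ((hτK.const_mul _).add (hτmK.const_mul _)) (ae_of_all _ hpt)
    _ = 2 * (2 * ρ - 1) ^ 2 * ∫ y in K, τ y ^ 2 ∂μ +
          8 * (ρ - 1) ^ 2 * ∫ y in K, τ (m y) ^ 2 ∂μ := by
        rw [integral_add (hτK.const_mul _) (hτmK.const_mul _), integral_const_mul,
          integral_const_mul]
    _ ≤ 2 * (2 * ρ - 1) ^ 2 * ∫ y in K, τ y ^ 2 ∂μ +
          8 * (ρ - 1) ^ 2 * (2 ^ n * ∫ y in K, τ y ^ 2 ∂μ) := by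
        gcongr
    _ = _ := by ring

theorem setIntegral_sq_image_homothety_le {μ : Measure E} [μ.IsAddHaarMeasure] (τ : E →ᵃ[ℝ] ℝ)
    {K : Set E} (hKm : MeasurableSet K) (hKc : Convex ℝ K) (hK : μ K ≠ ⊤) {x₀ : E} (hx₀ : x₀ ∈ K)
    {ρ : ℝ} (hρ : ρ ≠ 0) :
    ∫ x in homothety x₀ ρ '' K, τ x ^ 2 ∂μ ≤
      |ρ| ^ Module.finrank ℝ E *
        (2 * (2 * ρ - 1) ^ 2 + 2 ^ (Module.finrank ℝ E + 3) * (ρ - 1) ^ 2) *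
          ∫ y in K, τ y ^ 2 ∂μ := by
  rw [setIntegral_image_homothety μ hKm x₀ hρ, smul_eq_mul, mul_assoc]
  by_cases hτK : IntegrableOn (fun y => τ y ^ 2) K μ
  · gcongr
    exact integral_sq_comp_homothety_le τ hKm hKc hK hx₀ hτK ρ
  · -- both integrals are then the junk value 0
    rw [integral_undef hτK,
      integral_undef (mt (integrableOn_sq_comp_homothety_iff τ hK x₀ hρ).1 hτK)]
    simp

end Homothety

theorem stmt15_general (d : ℕ) (cm cp : ℝ) (ρmax : ℝ) (hρmax : 1 ≤ ρmax) :
    ∃ C : ℝ, 0 < C ∧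
      ∀ (K S : Set (EuclideanSpace ℝ (Fin d))) (x₀ : EuclideanSpace ℝ (Fin d)) (ρ : ℝ),
        MeasurableSet K → Convex ℝ K → x₀ ∈ K →
        0 < volume K → volume K < ⊤ →
        1 ≤ ρ → ρ ≤ ρmax →
        S = (fun x => x₀ + ρ • (x - x₀)) '' K →
        cm ≤ (volume S).toReal / (volume K).toReal →
        (volume S).toReal / (volume K).toReal ≤ cp →
        ∀ (v : EuclideanSpace ℝ (Fin d)) (c : ℝ),
          Real.sqrt ((∫ x in S, (⟪v, x⟫ + c)^2) + (volume S).toReal * ‖v‖^2) ≤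
            C * Real.sqrt ((∫ x in K, (⟪v, x⟫ + c)^2) + (volume K).toReal * ‖v‖^2) := by
  set C₂ := ρmax ^ d * (2 * (2 * ρmax - 1) ^ 2 + 2 ^ (d + 3) * (ρmax - 1) ^ 2) with hC₂_def
  have hC₂ : ρmax ^ d ≤ C₂ :=
    le_mul_of_one_le_right (by positivity) (le_add_of_le_of_nonneg (by nlinarith) (by positivity))
  have hC₂_pos : 0 < C₂ := (pow_pos (by linarith) d).trans_le hC₂
  refine ⟨√C₂, Real.sqrt_pos.2 hC₂_pos, ?_⟩
  rintro K S x₀ ρ hKm hKc hx₀ - hKfin hρ hρmax' rfl - - v c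
  set τ : EuclideanSpace ℝ (Fin d) →ᵃ[ℝ] ℝ :=
    (innerₛₗ ℝ v).toAffineMap + AffineMap.const ℝ _ c
  have hτ : ⇑τ = fun x => ⟪v, x⟫ + c := by ext; simp [τ]
  have hS : (fun x => x₀ + ρ • (x - x₀)) = homothety x₀ ρ := by
    ext; simp [AffineMap.homothety_apply, add_comm]
  have hρ₀ : 0 < ρ := by linarith
  have hL2 := setIntegral_sq_image_homothety_le τ hKm hKc hKfin.ne hx₀ hρ₀.ne'
  simp only [hτ, finrank_euclideanSpace_fin, abs_of_pos hρ₀] at hL2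
  have hvol : (volume (homothety x₀ ρ '' K)).toReal = ρ ^ d * (volume K).toReal := by
    rw [Measure.addHaar_image_homothety, ENNReal.toReal_mul,
      ENNReal.toReal_ofReal (by positivity), finrank_euclideanSpace_fin, abs_of_pos (by positivity)]
  have hk : ρ ^ d * (2 * (2 * ρ - 1) ^ 2 + 2 ^ (d + 3) * (ρ - 1) ^ 2) ≤ C₂ := by
    have : 0 ≤ 2 * ρ - 1 := by linarith
    have : 0 ≤ ρ - 1 := by linarith
    rw [hC₂_def]
    gcongr
  have hρd : ρ ^ d ≤ C₂ := (pow_le_pow_left₀ hρ₀.le hρmax' d).trans hC₂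
  rw [hS, hvol, ← Real.sqrt_mul hC₂_pos.le]
  gcongr
  calc _ ≤ C₂ * (∫ x in K, (⟪v, x⟫ + c) ^ 2) + C₂ * ((volume K).toReal * ‖v‖ ^ 2) := by
        rw [← mul_assoc]
        exact add_le_add (hL2.trans (by gcongr)) (by gcongr)
    _ = _ := by ring

/-- for an oversampling domain S obtained from the element K by a
homothety with bounded ratio (so that c₋ ≤ |S|/|K| ≤ c₊ uniformly), the H¹ norm
on S of any affine function τ(x) = ⟪v,x⟫ + c is controlled by its H¹ norm on K,
with a constant independent of the mesh size. -/
theorem stmt15 (d : ℕ) (hd : 0 < d) (cm cp : ℝ) (hcm : 0 < cm) (hcmcp : cm ≤ cp)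
    (ρmax : ℝ) (hρmax : 1 ≤ ρmax) :
    ∃ C : ℝ, 0 < C ∧
      ∀ (K S : Set (EuclideanSpace ℝ (Fin d))) (x₀ : EuclideanSpace ℝ (Fin d)) (ρ : ℝ),
        MeasurableSet K → Convex ℝ K → x₀ ∈ K →
        0 < volume K → volume K < ⊤ →
        1 ≤ ρ → ρ ≤ ρmax →
        S = (fun x => x₀ + ρ • (x - x₀)) '' K →
        cm ≤ (volume S).toReal / (volume K).toReal →
        (volume S).toReal / (volume K).toReal ≤ cp →
        ∀ (v : EuclideanSpace ℝ (Fin d)) (c : ℝ),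
          Real.sqrt ((∫ x in S, (⟪v, x⟫ + c)^2) + (volume S).toReal * ‖v‖^2) ≤
            C * Real.sqrt ((∫ x in K, (⟪v, x⟫ + c)^2) + (volume K).toReal * ‖v‖^2) :=
  stmt15_general d cm cp ρmax hρmax
end
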